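/- For any x = (x1, x2) ∈ ℝ × ℝ^{n-1}, the metric projection of x onto the second-order cone K^n is given explicitly by: P_{K^n}(x) = x if x ∈ K^n; P_{K^n}(x) = 0 if −x ∈ K^n; and otherwise P_{K^n}(x) = ((x1 + ‖x2‖)/2, ((x1 + ‖x2‖)/2)·x2/‖x2‖). -/

import Mathlib

open scoped Classical RealInnerProductSpace

noncomputable section

/-- The "tail" `x₂ ∈ ℝ^{n-1}` of a vector `x = (x₁, x₂) ∈ ℝ × ℝ^{n-1}`,
modelled as `x ∈ ℝ^{n}` via `EuclideanSpace ℝ (Fin (n+1))`. -/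
def socTail {n : ℕ} (x : EuclideanSpace ℝ (Fin (n + 1))) : EuclideanSpace ℝ (Fin n) :=
  WithLp.toLp 2 (fun i => x i.succ)

/-- The second-order cone `K = {(x₁, x₂) ∈ ℝ × ℝ^{n-1} : ‖x₂‖ ≤ x₁}`. -/
def soc (n : ℕ) : Set (EuclideanSpace ℝ (Fin (n + 1))) :=
  {x | ‖socTail x‖ ≤ x 0}

/-- The SOC absolute value `|x|`. -/
def socAbs {n : ℕ} (x : EuclideanSpace ℝ (Fin (n + 1))) :
    EuclideanSpace ℝ (Fin (n + 1)) :=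
  if socTail x = 0 then
    WithLp.toLp 2 (fun i => if i = 0 then |x 0| else 0)
  else
    WithLp.toLp 2 (fun i =>
      if i = 0 then (|x 0 - ‖socTail x‖| + |x 0 + ‖socTail x‖|) / 2
      else ((|x 0 + ‖socTail x‖| - |x 0 - ‖socTail x‖|) / 2) * (x i / ‖socTail x‖))

/-- The explicit candidate for the projection of `x` onto the second-order cone. -/
def socProjFormula {n : ℕ} (x : EuclideanSpace ℝ (Fin (n + 1))) :
    EuclideanSpace ℝ (Fin (n + 1)) :=
  if x ∈ soc n then x
  else if -x ∈ soc n then 0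
  else
    WithLp.toLp 2 (fun i =>
      if i = 0 then (x 0 + ‖socTail x‖) / 2
      else ((x 0 + ‖socTail x‖) / 2) * (x i / ‖socTail x‖))

namespace SocAux

variable {n : ℕ}

lemma inner_split (x y : EuclideanSpace ℝ (Fin (n + 1))) :
    ⟪x, y⟫ = x 0 * y 0 + ⟪socTail x, socTail y⟫ := by
  simp only [PiLp.inner_apply, RCLike.inner_apply, conj_trivial, socTail, WithLp.ofLp_toLp]
  rw [Fin.sum_univ_succ]
  ring

lemma socTail_neg (x : EuclideanSpace ℝ (Fin (n + 1))) :
    socTail (-x) = -socTail x := by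
  ext i; simp [socTail]

lemma socTail_smul_add (a b : ℝ) (y z : EuclideanSpace ℝ (Fin (n + 1))) :
    socTail (a • y + b • z) = a • socTail y + b • socTail z := by
  ext i; simp [socTail]

lemma convex_soc : Convex ℝ (soc n) := by
  intro y hy z hz a b ha hb hab
  have hy' : ‖socTail y‖ ≤ y 0 := hy
  have hz' : ‖socTail z‖ ≤ z 0 := hz
  show ‖socTail (a • y + b • z)‖ ≤ (a • y + b • z) 0
  rw [socTail_smul_add]
  have h0 : (a • y + b • z) 0 = a * y 0 + b * z 0 := by simp
  rw [h0]
  calc ‖a • socTail y + b • socTail z‖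
      ≤ ‖a • socTail y‖ + ‖b • socTail z‖ := norm_add_le _ _
    _ = a * ‖socTail y‖ + b * ‖socTail z‖ := by
        rw [norm_smul, norm_smul, Real.norm_eq_abs, Real.norm_eq_abs,
          abs_of_nonneg ha, abs_of_nonneg hb]
    _ ≤ a * y 0 + b * z 0 := by
        gcongr

end SocAux

set_option maxHeartbeats 1000000 in
open SocAux in
/-- The metric projection of `x` onto the second-order cone (the unique nearest point of
`K` to `x`) is given by the explicit formula: `x` if `x ∈ K`, `0` if `-x ∈ K`, and
`((x₁ + ‖x₂‖)/2, ((x₁ + ‖x₂‖)/2) • x₂/‖x₂‖)` otherwise. -/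
theorem soc_projection_formula (n : ℕ) (x : EuclideanSpace ℝ (Fin (n + 1))) :
    socProjFormula x ∈ soc n ∧
      (∀ y ∈ soc n, dist x (socProjFormula x) ≤ dist x y) ∧
      (∀ z ∈ soc n, (∀ y ∈ soc n, dist x z ≤ dist x y) → z = socProjFormula x) := by
  set p := socProjFormula x with hp
  obtain ⟨hmem, hVI⟩ : p ∈ soc n ∧ ∀ y ∈ soc n, ⟪x - p, y - p⟫ ≤ 0 := by
    by_cases hx : x ∈ soc n
    · have hpx : p = x := by rw [hp, socProjFormula, if_pos hx]
      rw [hpx]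
      exact ⟨hx, fun y hy => by simp⟩
    by_cases hnx : -x ∈ soc n
    · have hpx : p = 0 := by rw [hp, socProjFormula, if_neg hx, if_pos hnx]
      rw [hpx]
      have hz : (0 : EuclideanSpace ℝ (Fin (n+1))) ∈ soc n := by
        show ‖socTail (0 : EuclideanSpace ℝ (Fin (n+1)))‖ ≤ _
        have : socTail (0 : EuclideanSpace ℝ (Fin (n+1))) = 0 := by
          ext i; simp [socTail]
        simp [this]
      refine ⟨hz, fun y hy => ?_⟩
      have hy' : ‖socTail y‖ ≤ y 0 := hy
      have hnx' : ‖socTail (-x)‖ ≤ (-x) 0 := hnx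
      rw [socTail_neg] at hnx'
      have hnx'' : ‖socTail x‖ ≤ -(x 0) := by simpa using hnx'
      have hin : ⟪socTail x, socTail y⟫ ≤ ‖socTail x‖ * ‖socTail y‖ :=
        real_inner_le_norm _ _
      have h1 : ⟪x - 0, y - (0 : EuclideanSpace ℝ (Fin (n+1)))⟫ = ⟪x, y⟫ := by
        simp
      rw [h1, inner_split]
      nlinarith [norm_nonneg (socTail x), norm_nonneg (socTail y)]
    · -- main case
      have hx' : x 0 < ‖socTail x‖ := by
        by_contra h
        exact hx (le_of_not_gt h)
      have hnx' : -(x 0) < ‖socTail x‖ := by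
        by_contra h
        apply hnx
        show ‖socTail (-x)‖ ≤ (-x) 0
        rw [socTail_neg]
        simpa using le_of_not_gt h
      set r := ‖socTail x‖ with hr
      have hr0 : 0 < r := by linarith
      set a := (x 0 + r) / 2 with ha
      have ha0 : 0 < a := by rw [ha]; nlinarith
      have hpx : p = (fun i => if i = 0 then a else a * (x i / r)) := by
        rw [hp, socProjFormula, if_neg hx, if_neg hnx]
      have hp0 : p 0 = a := by rw [hpx]; simp
      have htp : socTail p = (a / r) • socTail x := by
        ext i
        show p i.succ = (a / r) * socTail x i
        rw [hpx]
        show (if i.succ = 0 then a else a * (x i.succ / r)) = (a / r) * socTail x i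
        rw [if_neg (Fin.succ_ne_zero i)]
        show a * (x i.succ / r) = (a / r) * x i.succ
        ring
      have hntp : ‖socTail p‖ = a := by
        rw [htp, norm_smul, Real.norm_eq_abs, abs_of_nonneg (by positivity), ← hr]
        field_simp
      have hmem : p ∈ soc n := by
        show ‖socTail p‖ ≤ p 0
        rw [hntp, hp0]
      refine ⟨hmem, fun y hy => ?_⟩
      have hy' : ‖socTail y‖ ≤ y 0 := hy
      have hin : ⟪socTail x, socTail y⟫ ≤ r * ‖socTail y‖ := by
        simpa [hr] using real_inner_le_norm (socTail x) (socTail y)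
      rw [inner_split]
      have hsub0 : (x - p) 0 = x 0 - a := by simp [hp0]
      have hsuby0 : (y - p) 0 = y 0 - a := by simp [hp0]
      have hsubt : socTail (x - p) = socTail x - socTail p := by
        ext i; simp [socTail]
      have hsubty : socTail (y - p) = socTail y - socTail p := by
        ext i; simp [socTail]
      rw [hsub0, hsuby0, hsubt, hsubty, htp]
      have hself : ⟪socTail x, socTail x⟫ = r ^ 2 := by
        rw [real_inner_self_eq_norm_sq, hr]
      have hxy : ⟪socTail x, socTail y⟫ = ⟪socTail y, socTail x⟫ :=
        real_inner_comm _ _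
      set s := (⟪socTail x, socTail y⟫ : ℝ) with hs'
      have hval : ⟪socTail x - (a / r) • socTail x, socTail y - (a / r) • socTail x⟫
          = s - (a/r)*s - ((a/r)*r^2 - (a/r)^2*r^2) := by
        simp only [inner_sub_left, inner_sub_right, real_inner_smul_left,
          real_inner_smul_right, hself, ← hs']
        ring
      have hne : r ≠ 0 := ne_of_gt hr0
      have hc2 : (a/r)*r^2 - (a/r)^2*r^2 = a*r - a^2 := by
        field_simp
      rw [hval, hc2]
      have h1c : 0 ≤ 1 - a/r := by
        rw [ha]
        rw [sub_nonneg, div_le_one hr0]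
        linarith
      have hsy : s ≤ r * y 0 := by
        have : r * ‖socTail y‖ ≤ r * y 0 := by
          apply mul_le_mul_of_nonneg_left hy' (le_of_lt hr0)
        linarith [hin]
      have hbound : s - (a/r)*s ≤ (r - a) * y 0 := by
        have h2 : (1 - a/r) * s ≤ (1 - a/r) * (r * y 0) :=
          mul_le_mul_of_nonneg_left hsy h1c
        have h3 : (1 - a/r) * (r * y 0) = (r - a) * y 0 := by
          field_simp
        nlinarith [h2, h3]
      have hy0 : 0 ≤ y 0 := le_trans (norm_nonneg _) hy'
      have hid : (x 0 - a) * (y 0 - a) + ((r - a) * y 0 - (a*r - a^2)) = 0 := by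
        rw [ha]; ring
      linarith [hbound, hid]
  refine ⟨hmem, ?_, ?_⟩
  · intro y hy
    have h1 := hVI y hy
    have key : (x - p) - (y - p) = x - y := by abel
    have h2 := norm_sub_sq_real (x - p) (y - p)
    rw [key] at h2
    rw [dist_eq_norm, dist_eq_norm]
    nlinarith [norm_nonneg (x - y), norm_nonneg (x - p), norm_nonneg (y - p)]
  · intro z hz hzmin
    have hmin : ∀ y ∈ soc n, dist x p ≤ dist x y := by
      intro y hy
      have h1 := hVI y hy
      have key : (x - p) - (y - p) = x - y := by abel
      have h2 := norm_sub_sq_real (x - p) (y - p)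
      rw [key] at h2
      rw [dist_eq_norm, dist_eq_norm]
      nlinarith [norm_nonneg (x - y), norm_nonneg (x - p), norm_nonneg (y - p)]
    have hd : dist x z = dist x p := le_antisymm (hzmin p hmem) (hmin z hz)
    set m := (1/2 : ℝ) • z + (1/2 : ℝ) • p with hm
    have hmmem : m ∈ soc n := convex_soc hz hmem (by norm_num) (by norm_num) (by norm_num)
    have hpar := parallelogram_law_with_norm ℝ (x - z) (x - p)
    have hsum : (x - z) + (x - p) = (2 : ℝ) • (x - m) := by
      rw [hm]; module
    have hdiff : (x - z) - (x - p) = p - z := by abel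
    rw [hsum, hdiff, norm_smul] at hpar
    have hnm : dist x p ≤ dist x m := hmin m hmmem
    rw [dist_eq_norm, dist_eq_norm] at hnm hd
    have : ‖p - z‖ = 0 := by
      simp only [Real.norm_ofNat] at hpar
      nlinarith [norm_nonneg (p - z), norm_nonneg (x - m), norm_nonneg (x - p)]
    have := sub_eq_zero.mp (norm_eq_zero.mp this)
    exact this.symm
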